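/- arXiv:1902.04728 — 4 statements merged into one kernel-verified Lean document; each statement's English description precedes it below -/
import Mathlib

section
/- Let u, w be probability vectors in the simplex Δ(1,k) (nonnegative entries summing to 1), and suppose w_i = u_i·(1 - η·g_i + η·⟨g,u⟩) for all i, where g ∈ ℝ^k, η > 0, and |η·g_i - η·⟨g,u⟩| ≤ 1/4 for all i. Then w has nonnegative entries summing to 1, and for any probability vector u* supported where u is, KL(u*||u) - KL(u*||w) ≥ η·⟨g, u - u*⟩ - 4η²·B² where B = max_i |g_i| (using |η g_i - η⟨g,u⟩| ≤ 2ηB). -/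
open Finset Real

lemma log_one_sub_ge (x : ℝ) (hx : |x| ≤ 1/4) : Real.log (1 - x) ≥ -x - x^2 := by
  rw [abs_le] at hx
  have h1 : (0:ℝ) < 1 - x := by linarith
  have hE : 0 < Real.exp (x + x^2) := Real.exp_pos _
  have hE' : 0 < Real.exp (-x - x^2) := Real.exp_pos _
  have hmul : Real.exp (-x - x^2) * Real.exp (x + x^2) = 1 := by
    rw [← Real.exp_add]; norm_num
  have key : Real.exp (-x - x^2) ≤ 1 - x := by
    have h3 : Real.exp (x + x^2) * (1 - x) ≥ 1 := by
      rcases le_or_gt x 0 with hx0 | hx0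
      · have h2 : 1 + (x + x^2) ≤ Real.exp (x + x^2) := by
          have := Real.add_one_le_exp (x + x^2); linarith
        nlinarith
      · have h2 : 1 + (x + x^2)/2 ≤ Real.exp ((x + x^2)/2) := by
          have := Real.add_one_le_exp ((x + x^2)/2); linarith
        have h4 : (1 + (x + x^2)/2)^2 ≤ Real.exp (x + x^2) := by
          have hsq : Real.exp ((x+x^2)/2) * Real.exp ((x+x^2)/2) = Real.exp (x+x^2) := by
            rw [← Real.exp_add]; ring_nf
          nlinarith [h2, Real.exp_pos ((x+x^2)/2)]
        nlinarith [h4, hx.2, sq_nonneg x, mul_pos hx0 hx0, mul_pos (mul_pos hx0 hx0) hx0]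
    nlinarith [h3, hmul, hE']
  calc -x - x^2 = Real.log (Real.exp (-x - x^2)) := (Real.log_exp _).symm
    _ ≤ Real.log (1 - x) := Real.log_le_log hE' key

/-- Single multiplicative-weights step on the probability simplex: the update stays in the
simplex, and the KL divergence to any competitor `u*` (supported where `u` is) decreases by at
least `η⟨g, u - u*⟩ - 4η²B²`. -/
theorem smg_step_kl_decrease {k : ℕ} (u w ustar g : Fin k → ℝ) (η B : ℝ)
    (hη : 0 < η)
    (hu0 : ∀ i, 0 ≤ u i) (hu1 : ∑ i, u i = 1)
    (hus0 : ∀ i, 0 ≤ ustar i) (hus1 : ∑ i, ustar i = 1)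
    (hsupp : ∀ i, u i = 0 → ustar i = 0)
    (hB : ∀ i, |g i| ≤ B)
    (hstep : ∀ i, |η * g i - η * (∑ j, g j * u j)| ≤ 1/4)
    (hw : ∀ i, w i = u i * (1 - η * g i + η * (∑ j, g j * u j))) :
    (∀ i, 0 ≤ w i) ∧ (∑ i, w i = 1) ∧
    (∑ i, ustar i * Real.log (ustar i / u i)) - (∑ i, ustar i * Real.log (ustar i / w i))
      ≥ η * (∑ i, g i * (u i - ustar i)) - 4 * η^2 * B^2 := by
  set S : ℝ := ∑ j, g j * u j with hS
  set δ : Fin k → ℝ := fun i => η * g i - η * S with hδ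
  clear_value S
  clear_value δ
  have hδle : ∀ i, |δ i| ≤ 1/4 := by intro i; rw [hδ]; exact hstep i
  have hfac : ∀ i, (3:ℝ)/4 ≤ 1 - δ i := by
    intro i; have := abs_le.mp (hδle i); linarith [this.2]
  have hwδ : ∀ i, w i = u i * (1 - δ i) := by
    intro i; rw [hw i]; simp only [hδ]; ring
  -- part 1
  have hw0 : ∀ i, 0 ≤ w i := by
    intro i; rw [hwδ i]
    exact mul_nonneg (hu0 i) (by linarith [hfac i])
  -- part 2
  have hw1 : ∑ i, w i = 1 := by
    have : ∀ i ∈ Finset.univ, w i = u i - η * (g i * u i) + (η * S) * u i := by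
      intro i _; rw [hw i]; ring
    rw [Finset.sum_congr rfl this, Finset.sum_add_distrib, Finset.sum_sub_distrib,
      ← Finset.mul_sum, ← Finset.mul_sum, ← hS, hu1]
    ring
  refine ⟨hw0, hw1, ?_⟩
  -- bounds on B and S
  have hBpos : 0 ≤ B := by
    have hk : k ≠ 0 := by
      rintro rfl
      simp at hu1
    exact le_trans (abs_nonneg _) (hB ⟨0, Nat.pos_of_ne_zero hk⟩)
  have hSB : |S| ≤ B := by
    rw [hS]
    calc |∑ j, g j * u j| ≤ ∑ j, |g j * u j| := Finset.abs_sum_le_sum_abs _ _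
      _ ≤ ∑ j, B * u j := by
          apply Finset.sum_le_sum
          intro j _
          rw [abs_mul, abs_of_nonneg (hu0 j)]
          exact mul_le_mul_of_nonneg_right (hB j) (hu0 j)
      _ = B := by rw [← Finset.mul_sum, hu1, mul_one]
  have hδsq : ∀ i, (δ i)^2 ≤ 4 * η^2 * B^2 := by
    intro i
    have h1 : |δ i| ≤ η * (2 * B) := by
      have : |δ i| = η * |g i - S| := by
        rw [show δ i = η * (g i - S) by simp only [hδ]; ring, abs_mul, abs_of_pos hη]
      rw [this]
      apply mul_le_mul_of_nonneg_left _ hη.le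
      calc |g i - S| ≤ |g i| + |S| := abs_sub _ _
        _ ≤ 2 * B := by linarith [hB i]
    have h2 : (δ i)^2 ≤ (η * (2*B))^2 := by
      rw [← sq_abs (δ i)]
      exact pow_le_pow_left₀ (abs_nonneg _) h1 2
    have h3 : (η * (2*B))^2 = 4 * η^2 * B^2 := by ring
    linarith
  -- pointwise KL bound
  have hterm : ∀ i ∈ Finset.univ, ustar i * (-(δ i) - (δ i)^2) ≤
      ustar i * Real.log (ustar i / u i) - ustar i * Real.log (ustar i / w i) := by
    intro i _
    rcases eq_or_lt_of_le (hus0 i) with h0 | h0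
    · rw [← h0]; simp
    · have hui : 0 < u i := by
        rcases eq_or_lt_of_le (hu0 i) with h | h
        · exact absurd (hsupp i h.symm) (ne_of_gt h0)
        · exact h
      have hwi : 0 < w i := by
        rw [hwδ i]; exact mul_pos hui (by linarith [hfac i])
      have hlog : Real.log (ustar i / u i) - Real.log (ustar i / w i)
          = Real.log (1 - δ i) := by
        rw [Real.log_div (ne_of_gt h0) (ne_of_gt hui),
            Real.log_div (ne_of_gt h0) (ne_of_gt hwi), hwδ i,
            Real.log_mul (ne_of_gt hui) (by have := hfac i; intro hc; rw [hc] at this; norm_num at this : (1 : ℝ) - δ i ≠ 0)]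
        ring
      have := log_one_sub_ge (δ i) (hδle i)
      calc ustar i * (-(δ i) - (δ i)^2) ≤ ustar i * Real.log (1 - δ i) :=
            mul_le_mul_of_nonneg_left this (hus0 i)
        _ = ustar i * Real.log (ustar i / u i) - ustar i * Real.log (ustar i / w i) := by
            rw [← hlog]; ring
  have hsum1 : ∑ i, ustar i * (-(δ i) - (δ i)^2)
      ≥ η * (∑ i, g i * (u i - ustar i)) - 4 * η^2 * B^2 := by
    have e1 : ∑ i, ustar i * (-(δ i) - (δ i)^2)
        = (∑ i, ustar i * (-(δ i))) - ∑ i, ustar i * (δ i)^2 := by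
      rw [← Finset.sum_sub_distrib]; apply Finset.sum_congr rfl; intro i _; ring
    have e2 : ∑ i, ustar i * (-(δ i)) = η * S - η * ∑ i, g i * ustar i := by
      have : ∀ i ∈ Finset.univ, ustar i * (-(δ i))
          = (η * S) * ustar i - η * (g i * ustar i) := by
        intro i _; simp only [hδ]; ring
      rw [Finset.sum_congr rfl this, Finset.sum_sub_distrib, ← Finset.mul_sum,
        ← Finset.mul_sum, hus1, mul_one]
    have e3 : ∑ i, ustar i * (δ i)^2 ≤ 4 * η^2 * B^2 := by
      calc ∑ i, ustar i * (δ i)^2 ≤ ∑ i, ustar i * (4 * η^2 * B^2) := by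
            apply Finset.sum_le_sum
            intro i _
            exact mul_le_mul_of_nonneg_left (hδsq i) (hus0 i)
        _ = 4 * η^2 * B^2 := by rw [← Finset.sum_mul, hus1, one_mul]
    have e4 : η * (∑ i, g i * (u i - ustar i)) = η * S - η * ∑ i, g i * ustar i := by
      simp only [hS]
      rw [← mul_sub, ← Finset.sum_sub_distrib]
      congr 1
      apply Finset.sum_congr rfl; intro i _; ring
    rw [e1, e2, e4]
    linarith
  calc η * (∑ i, g i * (u i - ustar i)) - 4 * η^2 * B^2
      ≤ ∑ i, ustar i * (-(δ i) - (δ i)^2) := hsum1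
    _ ≤ ∑ i, (ustar i * Real.log (ustar i / u i) - ustar i * Real.log (ustar i / w i)) :=
        Finset.sum_le_sum hterm
    _ = (∑ i, ustar i * Real.log (ustar i / u i)) - ∑ i, ustar i * Real.log (ustar i / w i) :=
        Finset.sum_sub_distrib _ _
end

section
/- Consider an Ising model distribution on {-1,1}^n with zero mean field: P[Z=z] ∝ exp(Σ_{i<j} A_{ij} z_i z_j) for a symmetric matrix A with zero diagonal. Then for every i ∈ [n-1], E[exp(-Σ_{j=1}^{n-1} A_{nj} Z_n Z_j)·Z_n·Z_i] = 0; i.e., the gradient of the Interaction Screening Objective at the true parameter vector v* (v*_j = A_{nj}) vanishes. -/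
open Finset

/-- For a zero-mean-field Ising model on `{-1,1}^{n+1}` (coordinates `Fin (n+1)`, with the
last coordinate playing the role of node `n`), the gradient of the Interaction Screening
Objective vanishes at the true parameter vector: for every `i ≠ n`,
`E[exp(-Σ_{j≠n} A_{nj} Z_n Z_j) · Z_n · Z_i] = 0`. -/
theorem iso_gradient_vanishes (n : ℕ) (A : Fin (n+1) → Fin (n+1) → ℝ)
    (hsym : ∀ i j, A i j = A j i) (hdiag : ∀ i, A i i = 0) :
    let σ : Bool → ℝ := fun b => if b then 1 else -1
    let weight : (Fin (n+1) → Bool) → ℝ := fun z =>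
      Real.exp (∑ i : Fin (n+1), ∑ j : Fin (n+1), if (i : ℕ) < (j : ℕ) then A i j * σ (z i) * σ (z j) else 0)
    let Zc : ℝ := ∑ z : Fin (n+1) → Bool, weight z
    ∀ i : Fin (n+1), i ≠ Fin.last n →
      (∑ z : Fin (n+1) → Bool, (weight z / Zc) *
        (Real.exp (-(∑ j : Fin (n+1),
            if j ≠ Fin.last n then A (Fin.last n) j * σ (z (Fin.last n)) * σ (z j) else 0))
          * σ (z (Fin.last n)) * σ (z i))) = 0 := by
  intro σ weight Zc i hi
  classical
  set L : Fin (n+1) := Fin.last n with hLdef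
  -- basic facts
  have hne : ∀ j : Fin (n+1), j ≠ L ↔ (j : ℕ) < n := by
    intro j
    have h1 := j.isLt
    constructor
    · intro h
      have : (j : ℕ) ≠ n := fun hc => h (Fin.ext (by simp [hLdef, hc]))
      omega
    · intro h hc
      rw [hc] at h
      simp [hLdef] at h
  have hLval : (L : ℕ) = n := by simp [hLdef]
  have hσnot : ∀ b : Bool, σ (!b) = -σ b := by
    intro b; cases b <;> simp [σ]
  -- the "screening" term
  set T : (Fin (n+1) → Bool) → ℝ := fun z =>
    ∑ j : Fin (n+1), if j ≠ L then A L j * σ (z L) * σ (z j) else 0 with hTdef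
  -- interactions not involving the last node
  set C : (Fin (n+1) → Bool) → ℝ := fun z =>
    ∑ i' : Fin (n+1), ∑ j : Fin (n+1),
      if (i' : ℕ) < (j : ℕ) ∧ (j : ℕ) < n then A i' j * σ (z i') * σ (z j) else 0 with hCdef
  have split : ∀ z : Fin (n+1) → Bool,
      (∑ i' : Fin (n+1), ∑ j : Fin (n+1),
        if (i' : ℕ) < (j : ℕ) then A i' j * σ (z i') * σ (z j) else 0) = C z + T z := by
    intro z
    have h1 : ∀ i' j : Fin (n+1),
        (if (i' : ℕ) < (j : ℕ) then A i' j * σ (z i') * σ (z j) else 0)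
        = (if (i' : ℕ) < (j : ℕ) ∧ (j : ℕ) < n then A i' j * σ (z i') * σ (z j) else 0)
          + (if (i' : ℕ) < (j : ℕ) ∧ ¬ (j : ℕ) < n then A i' j * σ (z i') * σ (z j) else 0) := by
      intro i' j
      by_cases h : (i' : ℕ) < (j : ℕ) <;> by_cases h2 : (j : ℕ) < n <;> simp [h, h2]
    calc (∑ i' : Fin (n+1), ∑ j : Fin (n+1),
            if (i' : ℕ) < (j : ℕ) then A i' j * σ (z i') * σ (z j) else 0)
        = C z + ∑ i' : Fin (n+1), ∑ j : Fin (n+1),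
            (if (i' : ℕ) < (j : ℕ) ∧ ¬ (j : ℕ) < n then A i' j * σ (z i') * σ (z j) else 0) := by
          rw [hCdef]
          rw [← Finset.sum_add_distrib]
          apply Finset.sum_congr rfl
          intro i' _
          rw [← Finset.sum_add_distrib]
          apply Finset.sum_congr rfl
          intro j _
          exact h1 i' j
      _ = C z + T z := by
          congr 1
          have h2 : ∀ i' : Fin (n+1),
              (∑ j : Fin (n+1), if (i' : ℕ) < (j : ℕ) ∧ ¬ (j : ℕ) < n
                then A i' j * σ (z i') * σ (z j) else 0)
              = if (i' : ℕ) < n then A i' L * σ (z i') * σ (z L) else 0 := by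
            intro i'
            rw [Finset.sum_eq_single L]
            · by_cases h : (i' : ℕ) < n <;> simp [hLval, h]
            · intro j _ hj
              have : (j : ℕ) < n := (hne j).mp hj
              simp [this]
            · simp
          rw [Finset.sum_congr rfl (fun i' _ => h2 i'), hTdef]
          apply Finset.sum_congr rfl
          intro j _
          by_cases h : (j : ℕ) < n
          · rw [if_pos ((hne j).mpr h), if_pos h, hsym]
            ring
          · rw [if_neg h, if_neg (fun hc => h ((hne j).mp hc))]
  -- invariance of C under flipping the last coordinate
  have hCflip : ∀ (z : Fin (n+1) → Bool) (b : Bool), C (Function.update z L b) = C z := by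
    intro z b
    rw [hCdef]
    apply Finset.sum_congr rfl
    intro i' _
    apply Finset.sum_congr rfl
    intro j _
    by_cases h : (i' : ℕ) < (j : ℕ) ∧ (j : ℕ) < n
    · have hj : j ≠ L := (hne j).mpr h.2
      have hi' : i' ≠ L := (hne i').mpr (h.1.trans h.2)
      rw [if_pos h, if_pos h, Function.update_of_ne hi', Function.update_of_ne hj]
    · rw [if_neg h, if_neg h]
  -- T flips sign
  have hTflip : ∀ z : Fin (n+1) → Bool, T (Function.update z L (!z L)) = - T z := by
    intro z
    rw [hTdef]
    simp only [← Finset.sum_neg_distrib]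
    apply Finset.sum_congr rfl
    intro j _
    by_cases h : j ≠ L
    · rw [if_pos h, if_pos h, Function.update_self, Function.update_of_ne h, hσnot]
      ring
    · rw [if_neg h, if_neg h, neg_zero]
  -- the summand in closed form
  have hf : ∀ z : Fin (n+1) → Bool,
      (weight z / Zc) * (Real.exp (-(T z)) * σ (z L) * σ (z i))
        = Real.exp (C z) / Zc * (σ (z L) * σ (z i)) := by
    intro z
    show Real.exp _ / Zc * _ = _
    rw [split z]
    rw [div_mul_eq_mul_div, div_mul_eq_mul_div]
    congr 1
    have hE : Real.exp (C z + T z) * Real.exp (-(T z)) = Real.exp (C z) := by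
      rw [← Real.exp_add]; ring_nf
    rw [← hE]; ring
  apply Finset.sum_ninvolution (fun z => Function.update z L (!z L))
  · intro z
    rw [hf z, hf (Function.update z L (!z L))]
    -- rewrite pieces
    have e1 : C (Function.update z L (!z L)) = C z := hCflip z (!z L)
    have e2 : Function.update z L (!z L) L = !z L := Function.update_self _ _ _
    have e3 : Function.update z L (!z L) i = z i := Function.update_of_ne hi _ _
    rw [e1, e2, e3, hσnot]
    ring
  · intro z _
    intro hc
    have := congrFun hc L
    rw [Function.update_self] at this
    exact Bool.not_ne_self _ this
  · intro z; exact Finset.mem_univ _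
  · intro z
    ext k
    by_cases h : k = L
    · subst h
      simp [Function.update_self]
    · simp [Function.update_of_ne h]
end

section
/- For the missing-data model where X_i = C_i·Z_i with Z ~ D an Ising model on {-1,1}^n and C_i ~ Bernoulli(1-p_i) independent, the estimator g^i(v;X) = -(X_n/(1-p_n))·(exp(-v_i X_n X_i)·X_i/(1-p_i))·∏_{j≠i,n} (exp(-v_j X_n X_j) - p_j)/(1-p_j) satisfies E_X[g^i(v;X)] = -E_Z[exp(-Σ_{j=1}^{n-1} v_j Z_n Z_j)·Z_n·Z_i], i.e., it is an unbiased estimator of the i-th partial derivative of the ISO. -/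
open Finset

/-- Unbiasedness of the missing-data gradient estimator: with `Z` an arbitrary `{-1,1}^{n+1}`
random vector (pmf `q`), independent masks `C_j ~ Bernoulli(1-p_j)`, and `X_j = C_j Z_j`,
the estimator `g^i(v;X)` has expectation `-E[exp(-Σ_j v_j Z_n Z_j)·Z_n·Z_i]`. -/
theorem missing_data_estimator_unbiased (n : ℕ)
    (q : (Fin (n+1) → Bool) → ℝ) (hq0 : ∀ z, 0 ≤ q z) (hq1 : ∑ z, q z = 1)
    (p : Fin (n+1) → ℝ) (hp0 : ∀ j, 0 ≤ p j) (hp1 : ∀ j, p j < 1)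
    (v : Fin n → ℝ) (i : Fin n) :
    let σ : Bool → ℝ := fun b => if b then 1 else -1
    let x : (Fin (n+1) → Bool) → (Fin (n+1) → Bool) → Fin (n+1) → ℝ :=
      fun z c j => if c j then σ (z j) else 0
    let g : (Fin (n+1) → ℝ) → ℝ := fun X =>
      -(X (Fin.last n) / (1 - p (Fin.last n)))
        * (Real.exp (-(v i * X (Fin.last n) * X i.castSucc)) * X i.castSucc
            / (1 - p i.castSucc))
        * ∏ j ∈ Finset.univ.erase i,
            (Real.exp (-(v j * X (Fin.last n) * X j.castSucc)) - p j.castSucc)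
              / (1 - p j.castSucc)
    (∑ z : Fin (n+1) → Bool, ∑ c : Fin (n+1) → Bool,
        q z * (∏ j, if c j then 1 - p j else p j) * g (x z c))
      = ∑ z : Fin (n+1) → Bool, q z *
          (-(Real.exp (-(∑ j : Fin n, v j * σ (z (Fin.last n)) * σ (z j.castSucc)))
              * σ (z (Fin.last n)) * σ (z i.castSucc))) := by
  intro σ x g
  have hpne : ∀ j : Fin (n+1), (1 : ℝ) - p j ≠ 0 := fun j => by
    have := hp1 j; linarith
  apply Finset.sum_congr rfl
  intro z _
  set L := Fin.last n with hL
  set s : Fin (n+1) → ℝ := fun k => σ (z k) with hs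
  -- the per-coordinate factorized functions
  set F : Fin (n+1) → Bool → ℝ :=
    Fin.snoc
      (fun j b => if j = i then
          (if b then Real.exp (-(v i * s L * s i.castSucc)) * s i.castSucc else 0)
        else
          (if b then Real.exp (-(v j * s L * s j.castSucc)) - p j.castSucc
           else p j.castSucc))
      (fun b => if b then -(s L) else 0) with hF
  have hFlast : F L = fun b => if b then -(s L) else 0 := by
    rw [hF]; exact Fin.snoc_last _ _
  have hFcast : ∀ j : Fin n, F j.castSucc = (fun b => if j = i then
          (if b then Real.exp (-(v i * s L * s i.castSucc)) * s i.castSucc else 0)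
        else
          (if b then Real.exp (-(v j * s L * s j.castSucc)) - p j.castSucc
           else p j.castSucc)) := by
    intro j; rw [hF]; exact Fin.snoc_castSucc _ _ _
  have key : ∀ c : Fin (n+1) → Bool,
      (∏ j, if c j then 1 - p j else p j) * g (x z c) = ∏ k, F k (c k) := by
    intro c
    rw [Fin.prod_univ_castSucc (fun k => F k (c k)),
        Fin.prod_univ_castSucc (fun k => if c k then 1 - p k else p k)]
    by_cases hc : c L
    · -- last mask on
      simp only [← hL, hFlast, hc, if_true]
      have hxL : x z c L = s L := by simp [x, hc, hs]
      rw [← Finset.mul_prod_erase univ (fun j : Fin n => F j.castSucc (c j.castSucc))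
            (Finset.mem_univ i),
          ← Finset.mul_prod_erase univ
            (fun j : Fin n => if c j.castSucc then 1 - p j.castSucc else p j.castSucc)
            (Finset.mem_univ i)]
      simp only [g, hxL]
      rw [← hL, hxL]
      have hi : (if c i.castSucc then 1 - p i.castSucc else p i.castSucc)
          * (Real.exp (-(v i * s L * x z c i.castSucc)) * x z c i.castSucc
              / (1 - p i.castSucc))
          = F i.castSucc (c i.castSucc) := by
        rw [hFcast i]
        by_cases hci : c i.castSucc
        · simp only [x, hci, if_true, if_pos rfl]
          field_simp [hpne i.castSucc, hs]
          simp only [hs]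
        · simp [x, hci]
      have hj : ∀ j ∈ univ.erase i,
          (if c j.castSucc then 1 - p j.castSucc else p j.castSucc)
            * ((Real.exp (-(v j * s L * x z c j.castSucc)) - p j.castSucc)
                / (1 - p j.castSucc))
          = F j.castSucc (c j.castSucc) := by
        intro j hjmem
        have hji : j ≠ i := (Finset.mem_erase.mp hjmem).1
        rw [hFcast j]
        by_cases hcj : c j.castSucc
        · simp only [x, hcj, if_true, if_neg hji]
          field_simp [hpne j.castSucc, hs]
          simp only [hs]
        · simp only [x, hcj, Bool.false_eq_true, if_false, if_neg hji, mul_zero,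
            neg_zero, Real.exp_zero]
          field_simp [hpne j.castSucc]
      have hprod : (∏ j ∈ univ.erase i,
            (if c j.castSucc then 1 - p j.castSucc else p j.castSucc))
          * (∏ j ∈ univ.erase i,
            (Real.exp (-(v j * s L * x z c j.castSucc)) - p j.castSucc)
              / (1 - p j.castSucc))
          = ∏ j ∈ univ.erase i, F j.castSucc (c j.castSucc) := by
        rw [← Finset.prod_mul_distrib]
        exact Finset.prod_congr rfl hj
      have hlast : (1 - p L) * -(s L / (1 - p L)) = -(s L) := by
        rw [mul_neg, mul_comm, div_mul_cancel₀ _ (hpne L)]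
      rw [← hi, ← hprod, ← hlast]
      ring
    · -- last mask off : both sides vanish
      simp only [← hL, hFlast, hc, if_false, Bool.false_eq_true]
      have hxL : x z c L = 0 := by simp [x, hc]
      simp [g, ← hL, hxL, zero_div]
  calc ∑ c : Fin (n+1) → Bool,
        q z * (∏ j, if c j then 1 - p j else p j) * g (x z c)
      = q z * ∑ c : Fin (n+1) → Bool, ∏ k, F k (c k) := by
        rw [Finset.mul_sum]
        exact Finset.sum_congr rfl fun c _ => by rw [mul_assoc, key c]
    _ = q z * ∏ k : Fin (n+1), (F k true + F k false) := by
        congr 1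
        have := Finset.prod_univ_sum (fun _ : Fin (n+1) => (Finset.univ : Finset Bool))
          (fun k b => F k b)
        rw [Fintype.piFinset_univ] at this
        rw [← this]
        exact Finset.prod_congr rfl fun k _ => by rw [Fintype.sum_bool]
    _ = _ := by
        congr 1
        rw [Fin.prod_univ_castSucc (fun k => F k true + F k false)]
        have hsumL : F L true + F L false = -(s L) := by rw [hFlast]; simp
        have hsum : ∀ j : Fin n, F j.castSucc true + F j.castSucc false
            = Real.exp (-(v j * s L * s j.castSucc))
                * (if j = i then s i.castSucc else 1) := by
          intro j; rw [hFcast j]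
          by_cases hji : j = i
          · subst hji; simp
          · simp only [if_neg hji, if_true, Bool.false_eq_true, if_false]; ring
        rw [Finset.prod_congr rfl (fun j _ => hsum j), hsumL, Finset.prod_mul_distrib,
          Finset.prod_ite_eq' univ i (fun _ => s i.castSucc), ← Real.exp_sum]
        simp only [Finset.mem_univ, if_true, hs]
        rw [show (∑ j : Fin n, -(v j * (if z L then (1:ℝ) else -1)
              * (if z j.castSucc then (1:ℝ) else -1)))
            = -(∑ j : Fin n, v j * (if z L then (1:ℝ) else -1)
              * (if z j.castSucc then (1:ℝ) else -1)) from by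
          rw [← Finset.sum_neg_distrib]]
        ring
end

section
/- In the missing-data model with all p_i ≤ p_max < 1, the unbiased gradient estimator g^i(v;X) = -(X_n/(1-p_n))·(exp(-v_i X_n X_i)·X_i/(1-p_i))·∏_{j≠i,n}(exp(-v_j X_n X_j)-p_j)/(1-p_j) satisfies |g^i(v;X)| ≤ (1/(1-p_max)²)·exp(λ/(1-p_max)) for all X ∈ {-1,0,1}^n and all v with ||v||₁ ≤ λ. -/
open Finset

lemma abs_exp_sub_le_aux (p a : ℝ) (hp0 : 0 ≤ p) (hp1 : p < 1) :
    |Real.exp a - p| ≤ (1 - p) * Real.exp (|a| / (1 - p)) := by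
  have h1 : (0:ℝ) < 1 - p := by linarith
  have hconv := convexOn_exp.2 (Set.mem_univ (0:ℝ)) (Set.mem_univ (|a| / (1 - p)))
    hp0 h1.le (by ring)
  have hs : p • (0:ℝ) + (1 - p) • (|a| / (1 - p)) = |a| := by
    simp [smul_eq_mul]
    field_simp
  rw [hs] at hconv
  simp only [smul_eq_mul, Real.exp_zero, mul_one] at hconv
  have h2 : Real.exp a ≤ Real.exp |a| := Real.exp_le_exp.mpr (le_abs_self a)
  have hmul : Real.exp a * Real.exp (-a) = 1 := by rw [← Real.exp_add]; simp
  have hge2 : 2 ≤ Real.exp a + Real.exp (-a) := by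
    nlinarith [Real.exp_pos a, Real.exp_pos (-a), sq_nonneg (Real.exp a - Real.exp (-a)),
      sq_nonneg (Real.exp a + Real.exp (-a) - 2)]
  have h3 : Real.exp (-a) ≤ Real.exp |a| := Real.exp_le_exp.mpr (neg_le_abs a)
  rw [abs_le]
  constructor <;> linarith

/-- Boundedness of the missing-data gradient estimator: for `X ∈ {-1,0,1}^{n+1}`,
`p_j ≤ p_max < 1` and `‖v‖₁ ≤ λ`,
`|g^i(v;X)| ≤ (1/(1-p_max)²)·exp(λ/(1-p_max))`. -/
theorem missing_data_estimator_bounded (n : ℕ)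
    (p : Fin (n+1) → ℝ) (pmax lam : ℝ)
    (hp0 : ∀ j, 0 ≤ p j) (hpmax : ∀ j, p j ≤ pmax) (hpmax1 : pmax < 1)
    (v : Fin n → ℝ) (hv : ∑ j, |v j| ≤ lam)
    (X : Fin (n+1) → ℝ) (hX : ∀ j, X j = -1 ∨ X j = 0 ∨ X j = 1)
    (i : Fin n) :
    |(-(X (Fin.last n) / (1 - p (Fin.last n)))
        * (Real.exp (-(v i * X (Fin.last n) * X i.castSucc)) * X i.castSucc
            / (1 - p i.castSucc))
        * ∏ j ∈ Finset.univ.erase i,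
            (Real.exp (-(v j * X (Fin.last n) * X j.castSucc)) - p j.castSucc)
              / (1 - p j.castSucc))|
      ≤ (1 / (1 - pmax)^2) * Real.exp (lam / (1 - pmax)) := by
  have h1pm : (0:ℝ) < 1 - pmax := by linarith
  have hpm0 : (0:ℝ) ≤ pmax := le_trans (hp0 0) (hpmax 0)
  have h1p : ∀ j : Fin (n+1), 0 < 1 - p j := fun j => by have := hpmax j; linarith
  have habsX : ∀ j, |X j| ≤ 1 := by intro j; rcases hX j with h|h|h <;> simp [h]
  have habsa : ∀ (j : Fin n), |(-(v j * X (Fin.last n) * X j.castSucc))| ≤ |v j| := by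
    intro j
    rw [abs_neg, abs_mul, abs_mul]
    calc |v j| * |X (Fin.last n)| * |X j.castSucc|
        ≤ |v j| * 1 * 1 := by
          gcongr
          · exact habsX _
          · exact habsX _
      _ = |v j| := by ring
  rw [abs_mul, abs_mul, Finset.abs_prod]
  have hB1 : |(-(X (Fin.last n) / (1 - p (Fin.last n))))| ≤ 1 / (1 - pmax) := by
    rw [abs_neg, abs_div, abs_of_pos (h1p _)]
    exact div_le_div₀ zero_le_one (habsX _) h1pm (by linarith [hpmax (Fin.last n)])
  have hB2 : |Real.exp (-(v i * X (Fin.last n) * X i.castSucc)) * X i.castSucc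
      / (1 - p i.castSucc)| ≤ Real.exp |v i| / (1 - pmax) := by
    rw [abs_div, abs_of_pos (h1p _), abs_mul, Real.abs_exp]
    refine div_le_div₀ (Real.exp_pos _).le ?_ h1pm (by linarith [hpmax i.castSucc])
    calc Real.exp (-(v i * X (Fin.last n) * X i.castSucc)) * |X i.castSucc|
        ≤ Real.exp |v i| * 1 := by
          gcongr
          · exact (le_abs_self _).trans (habsa i)
          · exact habsX _
      _ = _ := mul_one _
  have hB3 : ∏ j ∈ Finset.univ.erase i,
      |(Real.exp (-(v j * X (Fin.last n) * X j.castSucc)) - p j.castSucc)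
        / (1 - p j.castSucc)|
      ≤ Real.exp (∑ j ∈ Finset.univ.erase i, |v j| / (1 - pmax)) := by
    rw [Real.exp_sum]
    refine Finset.prod_le_prod (fun j _ => abs_nonneg _) (fun j _ => ?_)
    rw [abs_div, abs_of_pos (h1p _), div_le_iff₀ (h1p _)]
    have harg : |(-(v j * X (Fin.last n) * X j.castSucc))| / (1 - p j.castSucc)
        ≤ |v j| / (1 - pmax) :=
      div_le_div₀ (abs_nonneg _) (habsa j) h1pm (by linarith [hpmax j.castSucc])
    calc |Real.exp (-(v j * X (Fin.last n) * X j.castSucc)) - p j.castSucc|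
        ≤ (1 - p j.castSucc) *
            Real.exp (|(-(v j * X (Fin.last n) * X j.castSucc))| / (1 - p j.castSucc)) :=
          abs_exp_sub_le_aux _ _ (hp0 _) (lt_of_le_of_lt (hpmax _) hpmax1)
      _ ≤ (1 - p j.castSucc) * Real.exp (|v j| / (1 - pmax)) :=
          mul_le_mul_of_nonneg_left (Real.exp_le_exp.mpr harg) (h1p _).le
      _ = Real.exp (|v j| / (1 - pmax)) * (1 - p j.castSucc) := mul_comm _ _
  have hsum : |v i| + ∑ j ∈ Finset.univ.erase i, |v j| / (1 - pmax) ≤ lam / (1 - pmax) := by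
    have h1 : |v i| ≤ |v i| / (1 - pmax) := by
      rw [le_div_iff₀ h1pm]
      nlinarith [abs_nonneg (v i)]
    have h2 : |v i| / (1 - pmax) + ∑ j ∈ Finset.univ.erase i, |v j| / (1 - pmax)
        = (∑ j, |v j|) / (1 - pmax) := by
      rw [Finset.sum_div, Finset.add_sum_erase _ (fun j => |v j| / (1 - pmax))
        (Finset.mem_univ i)]
    have h3 : (∑ j, |v j|) / (1 - pmax) ≤ lam / (1 - pmax) := by gcongr
    linarith
  calc |(-(X (Fin.last n) / (1 - p (Fin.last n))))|
        * |Real.exp (-(v i * X (Fin.last n) * X i.castSucc)) * X i.castSucc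
            / (1 - p i.castSucc)|
        * ∏ j ∈ Finset.univ.erase i,
            |(Real.exp (-(v j * X (Fin.last n) * X j.castSucc)) - p j.castSucc)
              / (1 - p j.castSucc)|
      ≤ (1 / (1 - pmax)) * (Real.exp |v i| / (1 - pmax))
          * Real.exp (∑ j ∈ Finset.univ.erase i, |v j| / (1 - pmax)) :=
        mul_le_mul (mul_le_mul hB1 hB2 (abs_nonneg _) (by positivity)) hB3
          (Finset.prod_nonneg fun j _ => abs_nonneg _) (by positivity)
    _ = (1 / (1 - pmax)^2)
          * Real.exp (|v i| + ∑ j ∈ Finset.univ.erase i, |v j| / (1 - pmax)) := by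
        rw [Real.exp_add]; field_simp
    _ ≤ (1 / (1 - pmax)^2) * Real.exp (lam / (1 - pmax)) :=
        mul_le_mul_of_nonneg_left (Real.exp_le_exp.mpr hsum) (by positivity)
end
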